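/- arXiv:math/0010200 — 11 statements merged into one kernel-verified Lean document; each statement's English description precedes it below -/
import Mathlib

section
/- For vectors k, p, q in Z^2 \ {0} with k + p + q = 0, the coefficients A(p,q) = (1/2)(|q|^{-2} - |p|^{-2})(p_1 q_2 - p_2 q_1) satisfy the identity A(p,q) + A(q,k) + A(k,p) = 0. -/
/-! The determinant `p₁q₂ - p₂q₁` takes the same value on the three cyclically ordered pairs
`(p, q), (q, k), (k, p)` of vectors with `k + p + q = 0`, so the three terms of the sum share this
factor and their differences of inverse squared norms telescope to zero. -/

/-- The coefficient `A(p,q) = (1/2)(1/|q|² - 1/|p|²)(p₁q₂ - p₂q₁)` of the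
2D Euler kinetic equation, for `p, q ∈ ℤ²`. -/
noncomputable def eulerA (p q : ℤ × ℤ) : ℝ :=
  (1 / 2) * (((q.1 : ℝ) ^ 2 + (q.2 : ℝ) ^ 2)⁻¹ - ((p.1 : ℝ) ^ 2 + (p.2 : ℝ) ^ 2)⁻¹) *
    ((p.1 : ℝ) * (q.2 : ℝ) - (p.2 : ℝ) * (q.1 : ℝ))

def cross {R : Type*} [CommRing R] (p q : R × R) : R :=
  p.1 * q.2 - p.2 * q.1

lemma cross_cyclic_of_add_eq_zero {R : Type*} [CommRing R] {k p q : R × R}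
    (h : k + p + q = 0) : cross q k = cross p q ∧ cross k p = cross p q := by
  have hk : k = -p - q := by linear_combination h
  subst hk
  constructor <;> · simp only [cross, Prod.fst_sub, Prod.snd_sub, Prod.fst_neg, Prod.snd_neg]; ring

noncomputable def invNormSq (p : ℤ × ℤ) : ℝ :=
  ((p.1 : ℝ) ^ 2 + (p.2 : ℝ) ^ 2)⁻¹

lemma eulerA_eq_mul_cross (p q : ℤ × ℤ) :
    eulerA p q = (1 / 2) * (invNormSq q - invNormSq p) * ((cross p q : ℤ) : ℝ) := by
  simp only [eulerA, invNormSq, cross]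
  push_cast
  ring

theorem eulerA_cyclic_sum_general (k p q : ℤ × ℤ) (hsum : k + p + q = 0) :
    eulerA p q + eulerA q k + eulerA k p = 0 := by
  obtain ⟨hqk, hkp⟩ := cross_cyclic_of_add_eq_zero hsum
  simp only [eulerA_eq_mul_cross, hqk, hkp]
  ring

theorem eulerA_cyclic_sum (k p q : ℤ × ℤ) (hk : k ≠ 0) (hp : p ≠ 0) (hq : q ≠ 0)
    (hsum : k + p + q = 0) :
    eulerA p q + eulerA q k + eulerA k p = 0 :=
  eulerA_cyclic_sum_general k p q hsum
end

section
/- For vectors k, p, q in Z^2 \ {0} with k + p + q = 0, the coefficients A satisfy |k|^{-2} A(p,q) + |p|^{-2} A(q,k) + |q|^{-2} A(k,p) = 0. -/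
theorem cross_cyclic_of_add_add_eq_zero {R : Type*} [CommRing R] {k p q : R × R}
    (h : k + p + q = 0) : cross p q = cross k p ∧ cross q k = cross k p := by
  obtain rfl : q = -k - p := by rw [← sub_eq_zero, ← h]; abel
  constructor <;> simp only [cross, Prod.fst_sub, Prod.snd_sub, Prod.fst_neg, Prod.snd_neg] <;> ring

theorem eulerA_eq_cross (p q : ℤ × ℤ) :
    eulerA p q = 1 / 2 * (invNormSq q - invNormSq p) * ((cross p q : ℤ) : ℝ) := by
  simp only [eulerA, invNormSq, cross]
  push_cast
  rfl

theorem eulerA_weighted_cyclic_sum_general (k p q : ℤ × ℤ)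
    (hsum : k + p + q = 0) :
    (((k.1 : ℝ) ^ 2 + (k.2 : ℝ) ^ 2)⁻¹) * eulerA p q
      + (((p.1 : ℝ) ^ 2 + (p.2 : ℝ) ^ 2)⁻¹) * eulerA q k
      + (((q.1 : ℝ) ^ 2 + (q.2 : ℝ) ^ 2)⁻¹) * eulerA k p = 0 := by
  obtain ⟨hpq, hqk⟩ := cross_cyclic_of_add_add_eq_zero hsum
  change invNormSq k * eulerA p q + invNormSq p * eulerA q k + invNormSq q * eulerA k p = 0
  rw [eulerA_eq_cross, eulerA_eq_cross, eulerA_eq_cross, hpq, hqk]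
  ring

theorem eulerA_weighted_cyclic_sum (k p q : ℤ × ℤ) (hk : k ≠ 0) (hp : p ≠ 0) (hq : q ≠ 0)
    (hsum : k + p + q = 0) :
    (((k.1 : ℝ) ^ 2 + (k.2 : ℝ) ^ 2)⁻¹) * eulerA p q
      + (((p.1 : ℝ) ^ 2 + (p.2 : ℝ) ^ 2)⁻¹) * eulerA q k
      + (((q.1 : ℝ) ^ 2 + (q.2 : ℝ) ^ 2)⁻¹) * eulerA k p = 0 :=
  eulerA_weighted_cyclic_sum_general k p q hsum
end

section
/- The 4x4 matrix M with rows (0, -A_2 Γ, 0, 0), (A_1 Γ, 0, -A_3 Γ, 0), (0, A_2 Γ, 0, -A_4 Γ), (0, 0, A_3 Γ, 0), where A_1 = A_4 = -3/10 and A_2 = A_3 = 1/2 and Γ > 0, has characteristic polynomial λ^4 + (Γ^2/b) λ^2 + c for appropriate constants, and its eigenvalues are the four complex numbers ±(Γ/(2√10))√(1 ± i√35); in particular M has an eigenvalue with strictly positive real part. -/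
open Polynomial Complex

/-!
The matrix is tridiagonal with zero diagonal, so its characteristic polynomial is the
biquadratic `λ⁴ - (Γ²/20) λ² + 9Γ⁴/400`. It factors as `(λ² - α²)(λ² - β²)` with
`α² = Γ²(1 + i√35)/40` and `β² = Γ²(1 - i√35)/40`, so the eigenvalues are `±α, ±β`.
Since `α²` is not real, `α` is not purely imaginary, and one of `±α` has positive real part.
-/

theorem Matrix.charpoly_tridiagonal_zero_diag_fin_four {R : Type*} [CommRing R]
    (u₁ u₂ u₃ l₁ l₂ l₃ : R) :
    (!![0, u₁, 0, 0; l₁, 0, u₂, 0; 0, l₂, 0, u₃; 0, 0, l₃, 0] : Matrix (Fin 4) (Fin 4) R).charpoly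
      = X ^ 4 - C (u₁ * l₁ + u₂ * l₂ + u₃ * l₃) * X ^ 2 + C (u₁ * l₁ * (u₃ * l₃)) := by
  simp only [charpoly, det_succ_row_zero, det_unique, Fin.sum_univ_succ, Finset.univ_unique,
    Finset.sum_singleton, submatrix_apply, charmatrix_apply, diagonal_apply, of_apply, cons_val',
    cons_val_fin_one, cons_val, Fin.succAbove, Fin.val_succ, Fin.isValue, Fin.reduceSucc,
    Fin.reduceCastSucc, Fin.reduceLT, Fin.reduceEq, Fin.default_eq_zero, Fin.castSucc_zero,
    Fin.succ_zero_eq_one, Fin.succ_one_eq_two, Fin.castSucc_one, Fin.coe_ofNat_eq_mod, ↓reduceIte,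
    lt_self_iff_false, not_lt_zero, Nat.reduceMod, Nat.reduceAdd, map_zero, map_add, map_mul]
  ring

theorem biquadratic_eq_zero_iff {R : Type*} [CommRing R] [NoZeroDivisors R] {α β z : R} :
    z ^ 4 - (α ^ 2 + β ^ 2) * z ^ 2 + α ^ 2 * β ^ 2 = 0 ↔ z = α ∨ z = -α ∨ z = β ∨ z = -β := by
  rw [show z ^ 4 - (α ^ 2 + β ^ 2) * z ^ 2 + α ^ 2 * β ^ 2
      = (z ^ 2 - α ^ 2) * (z ^ 2 - β ^ 2) by ring, mul_eq_zero, sub_eq_zero, sub_eq_zero,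
    sq_eq_sq_iff_eq_or_eq_neg, sq_eq_sq_iff_eq_or_eq_neg, or_assoc]

theorem Complex.re_ne_zero_of_im_sq_ne_zero {w : ℂ} (h : (w ^ 2).im ≠ 0) : w.re ≠ 0 := by
  contrapose! h
  simp [sq, mul_im, h]

theorem I_mul_sqrt_thirtyFive_sq : (I * ((Real.sqrt 35 : ℝ) : ℂ)) ^ 2 = -35 := by
  rw [mul_pow, I_sq, ← ofReal_pow, Real.sq_sqrt (by norm_num)]
  push_cast
  ring

section

variable (Γ : ℝ)

noncomputable def fourModeEigenvalue (s t : ℝ) : ℂ :=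
  s * Γ / (2 * ((Real.sqrt 10 : ℝ) : ℂ)) * (1 + t * I * ((Real.sqrt 35 : ℝ) : ℂ)) ^ ((1 : ℂ) / 2)

theorem fourModeEigenvalue_neg_one (t : ℝ) :
    fourModeEigenvalue Γ (-1) t = -fourModeEigenvalue Γ 1 t := by
  simp only [fourModeEigenvalue]
  push_cast
  ring

theorem fourModeEigenvalue_sq (t : ℝ) :
    fourModeEigenvalue Γ 1 t ^ 2 = (Γ : ℂ) ^ 2 / 40 * (1 + t * I * ((Real.sqrt 35 : ℝ) : ℂ)) := by
  have h10 : ((Real.sqrt 10 : ℝ) : ℂ) ^ 2 = 10 := by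
    norm_cast
    exact Real.sq_sqrt (by norm_num)
  have hsqrt : ∀ w : ℂ, (w ^ ((1 : ℂ) / 2)) ^ 2 = w := fun w => by
    rw [one_div, cpow_ofNat_inv_pow]
  rw [fourModeEigenvalue, mul_pow, hsqrt, div_pow, mul_pow, mul_pow, h10]
  push_cast
  ring

theorem fourModeEigenvalue_sq_add_sq :
    fourModeEigenvalue Γ 1 1 ^ 2 + fourModeEigenvalue Γ 1 (-1) ^ 2 = (Γ : ℂ) ^ 2 / 20 := by
  rw [fourModeEigenvalue_sq, fourModeEigenvalue_sq]
  push_cast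
  ring

theorem fourModeEigenvalue_sq_mul_sq :
    fourModeEigenvalue Γ 1 1 ^ 2 * fourModeEigenvalue Γ 1 (-1) ^ 2 = 9 * (Γ : ℂ) ^ 4 / 400 := by
  rw [fourModeEigenvalue_sq, fourModeEigenvalue_sq]
  push_cast
  linear_combination (-(Γ : ℂ) ^ 4 / 1600) * I_mul_sqrt_thirtyFive_sq

theorem im_fourModeEigenvalue_sq :
    (fourModeEigenvalue Γ 1 1 ^ 2).im = Γ ^ 2 / 40 * Real.sqrt 35 := by
  rw [fourModeEigenvalue_sq]
  simp [mul_im, ← ofReal_pow]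

theorem exists_fourModeEigenvalue_eq_iff (z : ℂ) :
    (∃ s t : ℝ, (s = 1 ∨ s = -1) ∧ (t = 1 ∨ t = -1) ∧ z = fourModeEigenvalue Γ s t) ↔
      z = fourModeEigenvalue Γ 1 1 ∨ z = -fourModeEigenvalue Γ 1 1 ∨
        z = fourModeEigenvalue Γ 1 (-1) ∨ z = -fourModeEigenvalue Γ 1 (-1) := by
  constructor
  · rintro ⟨s, t, rfl | rfl, rfl | rfl, rfl⟩ <;> simp [fourModeEigenvalue_neg_one]
  · rintro (rfl | rfl | rfl | rfl)
    exacts [⟨1, 1, by simp⟩, ⟨-1, 1, by simp [fourModeEigenvalue_neg_one]⟩, ⟨1, -1, by simp⟩,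
      ⟨-1, -1, by simp [fourModeEigenvalue_neg_one]⟩]

end

theorem Complex.exists_mem_re_pos_of_neg_mem {S : Set ℂ} {w : ℂ} (hw : w ∈ S) (hnw : -w ∈ S)
    (hre : w.re ≠ 0) : ∃ z ∈ S, 0 < z.re := by
  rcases hre.lt_or_gt with hneg | hpos
  · exact ⟨-w, hnw, by simpa using hneg⟩
  · exact ⟨w, hw, hpos⟩

/-- The four-mode Galerkin truncation matrix (with `A₁ = A₄ = -3/10`, `A₂ = A₃ = 1/2`)
has characteristic polynomial `λ⁴ + (Γ²/b) λ² + c` for appropriate constants, its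
eigenvalues are exactly `±(Γ/(2√10))√(1 ± i√35)`, and in particular it has an
eigenvalue with strictly positive real part. -/
theorem fourMode_truncation_eigenvalues (Γ : ℝ) (hΓ : 0 < Γ) :
    let A₁ : ℝ := -(3 / 10); let A₂ : ℝ := 1 / 2; let A₃ : ℝ := 1 / 2
    let A₄ : ℝ := -(3 / 10)
    let M : Matrix (Fin 4) (Fin 4) ℂ :=
      (!![0, -A₂ * Γ, 0, 0;
          A₁ * Γ, 0, -A₃ * Γ, 0;
          0, A₂ * Γ, 0, -A₄ * Γ;
          0, 0, A₃ * Γ, 0]).map Complex.ofReal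
    (∃ b c : ℝ, M.charpoly = X ^ 4 + C ((Γ ^ 2 / b : ℝ) : ℂ) * X ^ 2 + C ((c : ℝ) : ℂ))
    ∧ spectrum ℂ M =
        {z : ℂ | ∃ s t : ℝ, (s = 1 ∨ s = -1) ∧ (t = 1 ∨ t = -1) ∧
          z = (s : ℂ) * ((Γ : ℝ) : ℂ) / (2 * ((Real.sqrt 10 : ℝ) : ℂ)) *
            ((1 + (t : ℂ) * Complex.I * ((Real.sqrt 35 : ℝ) : ℂ)) ^ ((1 : ℂ) / 2))}
    ∧ ∃ z ∈ spectrum ℂ M, 0 < z.re := by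
  intro A₁ A₂ A₃ A₄ M
  have hcharpoly : M.charpoly
      = X ^ 4 + C ((Γ ^ 2 / (-20) : ℝ) : ℂ) * X ^ 2 + C ((9 * Γ ^ 4 / 400 : ℝ) : ℂ) := by
    rw [show M = Matrix.map _ ofRealHom from rfl, Matrix.charpoly_map,
      Matrix.charpoly_tridiagonal_zero_diag_fin_four]
    simp only [Polynomial.map_add, Polynomial.map_sub, Polynomial.map_mul, Polynomial.map_pow,
      map_X, map_C]
    rw [sub_eq_add_neg, ← neg_mul, ← C_neg, ← map_neg]
    congr 4 <;> simp only [ofRealHom_eq_coe, ofReal_inj, A₁, A₂, A₃, A₄] <;> ring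
  set α := fourModeEigenvalue Γ 1 1
  set β := fourModeEigenvalue Γ 1 (-1)
  have hmem (z : ℂ) : z ∈ spectrum ℂ M ↔ z = α ∨ z = -α ∨ z = β ∨ z = -β := by
    rw [Matrix.mem_spectrum_iff_isRoot_charpoly, hcharpoly, ← biquadratic_eq_zero_iff,
      fourModeEigenvalue_sq_add_sq, fourModeEigenvalue_sq_mul_sq]
    simp only [IsRoot, eval_add, eval_mul, eval_pow, eval_C, eval_X]
    congr! 1
    push_cast
    ring
  have hαre : α.re ≠ 0 := re_ne_zero_of_im_sq_ne_zero <| by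
    rw [im_fourModeEigenvalue_sq]
    positivity
  refine ⟨⟨-20, 9 * Γ ^ 4 / 400, hcharpoly⟩,
    Set.ext fun z => (hmem z).trans (exists_fourModeEigenvalue_eq_iff Γ z).symm, ?_⟩
  exact exists_mem_re_pos_of_neg_mem ((hmem α).2 (Or.inl rfl))
    ((hmem (-α)).2 (Or.inr (Or.inl rfl))) hαre
end

section
/- For the 4x4 chopped linear system matrix with superdiagonal entries -A_{5j+2}Γ, -A_{5j+3}Γ, -A_{5j+4}Γ and subdiagonal entries A_{5j+1}Γ, A_{5j+2}Γ, A_{5j+3}Γ, if b = -(A_{5j+1}A_{5j+2} + A_{5j+2}A_{5j+3} + A_{5j+3}A_{5j+4}) < 0, c = A_{5j+1}A_{5j+2}A_{5j+3}A_{5j+4} > 0, and 0 < b^2 - 4c < b^2, then the eigenvalues are λ = ± i (Γ/√2) √|b ± √(b^2 - 4c)|, i.e., two complex-conjugate pairs of purely imaginary numbers. -/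
/-!
The characteristic polynomial of the chopped matrix is the biquadratic `λ⁴ - bΓ²λ² + cΓ⁴`.
Writing `Δ = b² - 4c`, the hypotheses force `b ± √Δ < 0`, so it factors over `ℝ` as
`(λ² + Γ²|b + √Δ|/2)(λ² + Γ²|b - √Δ|/2)`, and `λ² + w² = (λ - i w)(λ + i w)`.
-/

open Polynomial Complex

theorem Matrix.charpoly_tridiagonal_zero_diagonal {R : Type*} [CommRing R] (p q r s t u : R) :
    (!![0, p, 0, 0; q, 0, r, 0; 0, s, 0, t; 0, 0, u, 0]).charpoly =
      X ^ 4 - C (p * q + r * s + t * u) * X ^ 2 + C (p * q * (t * u)) := by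
  simp [Matrix.charpoly, Matrix.charmatrix, Matrix.det_succ_row_zero, Fin.sum_univ_succ,
    Fin.succAbove]
  ring

theorem Complex.sq_add_sq_eq_zero_iff (z w : ℂ) :
    z ^ 2 + w ^ 2 = 0 ↔ ∃ s : ℝ, (s = 1 ∨ s = -1) ∧ z = s * I * w := by
  have hfactor : z ^ 2 + w ^ 2 = (z - I * w) * (z + I * w) := by
    linear_combination w ^ 2 * I_sq
  rw [hfactor, mul_eq_zero, sub_eq_zero, add_eq_zero_iff_eq_neg]
  constructor
  · rintro (h | h)
    · exact ⟨1, .inl rfl, by simp [h]⟩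
    · exact ⟨-1, .inr rfl, by simp [h]⟩
  · rintro ⟨s, rfl | rfl, rfl⟩ <;> simp

theorem Real.div_sqrt_two_mul_sqrt_abs_sq (Γ : ℝ) {x : ℝ} (hx : x ≤ 0) :
    (Γ / √2 * √|x|) ^ 2 = Γ ^ 2 * -x / 2 := by
  rw [mul_pow, div_pow, Real.sq_sqrt zero_le_two, Real.sq_sqrt (abs_nonneg x), abs_of_nonpos hx]
  ring

def choppedMatrix (a₁ a₂ a₃ a₄ Γ : ℝ) : Matrix (Fin 4) (Fin 4) ℝ :=
  !![0, -a₂ * Γ, 0, 0;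
      a₁ * Γ, 0, -a₃ * Γ, 0;
      0, a₂ * Γ, 0, -a₄ * Γ;
      0, 0, a₃ * Γ, 0]

theorem choppedMatrix_charpoly {a₁ a₂ a₃ a₄ Γ b c D : ℝ}
    (hb : b = -(a₁ * a₂ + a₂ * a₃ + a₃ * a₄)) (hc : c = a₁ * a₂ * a₃ * a₄)
    (hD : D ^ 2 = b ^ 2 - 4 * c) :
    (choppedMatrix a₁ a₂ a₃ a₄ Γ).charpoly =
      (X ^ 2 + C (Γ ^ 2 * -(b + D) / 2)) * (X ^ 2 + C (Γ ^ 2 * -(b - D) / 2)) := by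
  have hsum : -a₂ * Γ * (a₁ * Γ) + -a₃ * Γ * (a₂ * Γ) + -a₄ * Γ * (a₃ * Γ) =
      -(Γ ^ 2 * -(b + D) / 2 + Γ ^ 2 * -(b - D) / 2) := by
    linear_combination -Γ ^ 2 * hb
  have hprod : -a₂ * Γ * (a₁ * Γ) * (-a₄ * Γ * (a₃ * Γ)) =
      Γ ^ 2 * -(b + D) / 2 * (Γ ^ 2 * -(b - D) / 2) := by
    linear_combination Γ ^ 4 / 4 * hD - Γ ^ 4 * hc
  rw [choppedMatrix, Matrix.charpoly_tridiagonal_zero_diagonal, hsum, hprod, C_neg, C_add, C_mul]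
  ring

theorem chopped_system_eigenvalues_general (a₁ a₂ a₃ a₄ Γ : ℝ)
    (b c : ℝ) (hb : b = -(a₁ * a₂ + a₂ * a₃ + a₃ * a₄)) (hc : c = a₁ * a₂ * a₃ * a₄)
    (hbneg : b < 0) (hdisc : 0 < b ^ 2 - 4 * c) (hdisc' : b ^ 2 - 4 * c < b ^ 2) :
    let M : Matrix (Fin 4) (Fin 4) ℂ :=
      (!![0, -a₂ * Γ, 0, 0;
          a₁ * Γ, 0, -a₃ * Γ, 0;
          0, a₂ * Γ, 0, -a₄ * Γ;
          0, 0, a₃ * Γ, 0]).map Complex.ofReal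
    spectrum ℂ M =
      {z : ℂ | ∃ s t : ℝ, (s = 1 ∨ s = -1) ∧ (t = 1 ∨ t = -1) ∧
        z = (s : ℂ) * Complex.I * ((Γ / Real.sqrt 2 : ℝ) : ℂ) *
          ((Real.sqrt |b + t * Real.sqrt (b ^ 2 - 4 * c)| : ℝ) : ℂ)} := by
  intro M
  set D := √(b ^ 2 - 4 * c)
  have hD : D ^ 2 = b ^ 2 - 4 * c := Real.sq_sqrt hdisc.le
  have hD₀ : 0 ≤ D := Real.sqrt_nonneg _
  have hDlt : D < -b := by nlinarith
  let w (t : ℝ) : ℂ := ((Γ / √2 : ℝ) : ℂ) * ((√|b + t * D| : ℝ) : ℂ)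
  have hw (t : ℝ) (ht : b + t * D ≤ 0) : w t ^ 2 = ((Γ ^ 2 * -(b + t * D) / 2 : ℝ) : ℂ) := by
    rw [← Real.div_sqrt_two_mul_sqrt_abs_sq Γ ht, ofReal_pow, ofReal_mul, mul_pow]
  have hchar (z : ℂ) : M.charpoly.eval z = (z ^ 2 + w 1 ^ 2) * (z ^ 2 + w (-1) ^ 2) := by
    rw [show M.charpoly = _ from Matrix.charpoly_map (choppedMatrix a₁ a₂ a₃ a₄ Γ) ofRealHom,
      choppedMatrix_charpoly hb hc hD, hw 1 (by linarith), hw (-1) (by linarith)]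
    simp [sub_eq_add_neg]
  ext z
  rw [Matrix.mem_spectrum_iff_isRoot_charpoly, IsRoot.def, hchar, mul_eq_zero,
    sq_add_sq_eq_zero_iff, sq_add_sq_eq_zero_iff, Set.mem_ofPred_eq]
  constructor
  · rintro (⟨s, hs, rfl⟩ | ⟨s, hs, rfl⟩)
    · exact ⟨s, 1, hs, .inl rfl, by ring⟩
    · exact ⟨s, -1, hs, .inr rfl, by ring⟩
  · rintro ⟨s, t, hs, rfl | rfl, rfl⟩
    · exact .inl ⟨s, hs, by ring⟩
    · exact .inr ⟨s, hs, by ring⟩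

/-- Eigenvalues of the chopped linear system: under the stated sign conditions on
`b = -(a₁a₂ + a₂a₃ + a₃a₄)` and `c = a₁a₂a₃a₄`, the spectrum consists of the two
complex-conjugate purely imaginary pairs `± i (Γ/√2) √|b ± √(b² - 4c)|`. -/
theorem chopped_system_eigenvalues (a₁ a₂ a₃ a₄ Γ : ℝ)
    (b c : ℝ) (hb : b = -(a₁ * a₂ + a₂ * a₃ + a₃ * a₄)) (hc : c = a₁ * a₂ * a₃ * a₄)
    (hbneg : b < 0) (hcpos : 0 < c) (hdisc : 0 < b ^ 2 - 4 * c) (hdisc' : b ^ 2 - 4 * c < b ^ 2) :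
    let M : Matrix (Fin 4) (Fin 4) ℂ :=
      (!![0, -a₂ * Γ, 0, 0;
          a₁ * Γ, 0, -a₃ * Γ, 0;
          0, a₂ * Γ, 0, -a₄ * Γ;
          0, 0, a₃ * Γ, 0]).map Complex.ofReal
    spectrum ℂ M =
      {z : ℂ | ∃ s t : ℝ, (s = 1 ∨ s = -1) ∧ (t = 1 ∨ t = -1) ∧
        z = (s : ℂ) * Complex.I * ((Γ / Real.sqrt 2 : ℝ) : ℂ) *
          ((Real.sqrt |b + t * Real.sqrt (b ^ 2 - 4 * c)| : ℝ) : ℂ)} :=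
  chopped_system_eigenvalues_general a₁ a₂ a₃ a₄ Γ b c hb hc hbneg hdisc hdisc'
end

section
/- The quantity I = 2 A_{1,2}(ω_1 ω_3 + ω_2 ω_4) + A_2 ω_p^2 is a conserved quantity of the five-dimensional ODE system: its time derivative along any solution is identically zero. -/
/-!
Along the flow the `A₁`-terms of `(ω₁ω₃ + ω₂ω₄)'` cancel, leaving `A₂ωₚ(ω₁ω₂ - ω₃ω₄)`,
while `(ωₚ²)' = 2A₁₂ωₚ(ω₃ω₄ - ω₁ω₂)`; in `I` the two contributions cancel for arbitrary
constants `A₁, A₂, A₁₂`.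
-/

theorem hasDerivAt_mul_add_mul_of_flow {ω₁ ω₂ ω₃ ω₄ ωp : ℝ → ℝ} {A₁ A₂ : ℝ} {t : ℝ}
    (h₁ : HasDerivAt ω₁ (-A₂ * ωp t * ω₂ t) t)
    (h₂ : HasDerivAt ω₂ (A₁ * ωp t * ω₁ t - A₂ * ωp t * ω₃ t) t)
    (h₃ : HasDerivAt ω₃ (A₂ * ωp t * ω₂ t - A₁ * ωp t * ω₄ t) t)
    (h₄ : HasDerivAt ω₄ (A₂ * ωp t * ω₃ t) t) :
    HasDerivAt (fun t => ω₁ t * ω₃ t + ω₂ t * ω₄ t)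
      (A₂ * ωp t * (ω₁ t * ω₂ t - ω₃ t * ω₄ t)) t :=
  ((h₁.mul h₃).add (h₂.mul h₄)).congr_deriv (by ring)

theorem I_invariant_general (ω₁ ω₂ ω₃ ω₄ ωp : ℝ → ℝ)
    (A₁ A₂ A₁₂ : ℝ)
    (h₁ : ∀ t, HasDerivAt ω₁ (-A₂ * ωp t * ω₂ t) t)
    (h₂ : ∀ t, HasDerivAt ω₂ (A₁ * ωp t * ω₁ t - A₂ * ωp t * ω₃ t) t)
    (h₃ : ∀ t, HasDerivAt ω₃ (A₂ * ωp t * ω₂ t - A₁ * ωp t * ω₄ t) t)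
    (h₄ : ∀ t, HasDerivAt ω₄ (A₂ * ωp t * ω₃ t) t)
    (hp : ∀ t, HasDerivAt ωp (A₁₂ * (ω₃ t * ω₄ t - ω₁ t * ω₂ t)) t) :
    ∀ t, HasDerivAt
      (fun t => 2 * A₁₂ * (ω₁ t * ω₃ t + ω₂ t * ω₄ t) + A₂ * (ωp t) ^ 2) 0 t := by
  intro t
  have hcross := hasDerivAt_mul_add_mul_of_flow (h₁ t) (h₂ t) (h₃ t) (h₄ t)
  have hsq := (hp t).pow 2
  exact ((hcross.const_mul (2 * A₁₂)).add (hsq.const_mul A₂)).congr_deriv (by ring)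

/-- `I = 2A₁₂(ω₁ω₃ + ω₂ω₄) + A₂ωₚ²` is conserved along solutions of the
five-dimensional invariant subsystem (here `A₁ = -3/10`, `A₂ = 1/2`, `A₁₂ = -4/5`). -/
theorem I_invariant (ω₁ ω₂ ω₃ ω₄ ωp : ℝ → ℝ)
    (A₁ A₂ A₁₂ : ℝ) (hA₁ : A₁ = -(3 / 10)) (hA₂ : A₂ = 1 / 2) (hA₁₂ : A₁₂ = -(4 / 5))
    (h₁ : ∀ t, HasDerivAt ω₁ (-A₂ * ωp t * ω₂ t) t)
    (h₂ : ∀ t, HasDerivAt ω₂ (A₁ * ωp t * ω₁ t - A₂ * ωp t * ω₃ t) t)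
    (h₃ : ∀ t, HasDerivAt ω₃ (A₂ * ωp t * ω₂ t - A₁ * ωp t * ω₄ t) t)
    (h₄ : ∀ t, HasDerivAt ω₄ (A₂ * ωp t * ω₃ t) t)
    (hp : ∀ t, HasDerivAt ωp (A₁₂ * (ω₃ t * ω₄ t - ω₁ t * ω₂ t)) t) :
    ∀ t, HasDerivAt
      (fun t => 2 * A₁₂ * (ω₁ t * ω₃ t + ω₂ t * ω₄ t) + A₂ * (ωp t) ^ 2) 0 t :=
  I_invariant_general ω₁ ω₂ ω₃ ω₄ ωp A₁ A₂ A₁₂ h₁ h₂ h₃ h₄ hp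
end

section
/- The quantity U = A_1(ω_1^2 + ω_4^2) + A_2(ω_2^2 + ω_3^2) is a conserved quantity of the five-dimensional ODE system: dU/dt = 0 along any solution. -/
theorem U_invariant_general (ω₁ ω₂ ω₃ ω₄ ωp : ℝ → ℝ) (A₁ A₂ : ℝ)
    (h₁ : ∀ t, HasDerivAt ω₁ (-A₂ * ωp t * ω₂ t) t)
    (h₂ : ∀ t, HasDerivAt ω₂ (A₁ * ωp t * ω₁ t - A₂ * ωp t * ω₃ t) t)
    (h₃ : ∀ t, HasDerivAt ω₃ (A₂ * ωp t * ω₂ t - A₁ * ωp t * ω₄ t) t)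
    (h₄ : ∀ t, HasDerivAt ω₄ (A₂ * ωp t * ω₃ t) t) :
    ∀ t, HasDerivAt
      (fun t => A₁ * ((ω₁ t) ^ 2 + (ω₄ t) ^ 2) + A₂ * ((ω₂ t) ^ 2 + (ω₃ t) ^ 2)) 0 t := by
  intro t
  have hU := ((((h₁ t).pow 2).add ((h₄ t).pow 2)).const_mul A₁).add
    ((((h₂ t).pow 2).add ((h₃ t).pow 2)).const_mul A₂)
  -- the two brackets contribute `∓ 2 A₁ A₂ ωp (ω₁ ω₂ - ω₃ ω₄)`
  refine hU.congr_deriv ?_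
  ring

/-- `U = A₁(ω₁² + ω₄²) + A₂(ω₂² + ω₃²)` is conserved along solutions of the
five-dimensional invariant subsystem. -/
theorem U_invariant (ω₁ ω₂ ω₃ ω₄ ωp : ℝ → ℝ) (A₁ A₂ A₁₂ : ℝ) (hA₁₂ : A₁₂ = A₁ - A₂)
    (h₁ : ∀ t, HasDerivAt ω₁ (-A₂ * ωp t * ω₂ t) t)
    (h₂ : ∀ t, HasDerivAt ω₂ (A₁ * ωp t * ω₁ t - A₂ * ωp t * ω₃ t) t)
    (h₃ : ∀ t, HasDerivAt ω₃ (A₂ * ωp t * ω₂ t - A₁ * ωp t * ω₄ t) t)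
    (h₄ : ∀ t, HasDerivAt ω₄ (A₂ * ωp t * ω₃ t) t)
    (hp : ∀ t, HasDerivAt ωp (A₁₂ * (ω₃ t * ω₄ t - ω₁ t * ω₂ t)) t) :
    ∀ t, HasDerivAt
      (fun t => A₁ * ((ω₁ t) ^ 2 + (ω₄ t) ^ 2) + A₂ * ((ω₂ t) ^ 2 + (ω₃ t) ^ 2)) 0 t :=
  U_invariant_general ω₁ ω₂ ω₃ ω₄ ωp A₁ A₂ h₁ h₂ h₃ h₄
end

section
/- The enstrophy J = ω_p^2 + ω_1^2 + ω_2^2 + ω_3^2 + ω_4^2 is a conserved quantity of the five-dimensional ODE system provided A_{1,2} = A_1 - A_2. -/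
/-- The enstrophy `J = ωₚ² + ω₁² + ω₂² + ω₃² + ω₄²` is conserved along solutions of the
five-dimensional invariant subsystem, provided `A₁₂ = A₁ - A₂`. -/
theorem J_invariant (ω₁ ω₂ ω₃ ω₄ ωp : ℝ → ℝ) (A₁ A₂ A₁₂ : ℝ) (hA₁₂ : A₁₂ = A₁ - A₂)
    (h₁ : ∀ t, HasDerivAt ω₁ (-A₂ * ωp t * ω₂ t) t)
    (h₂ : ∀ t, HasDerivAt ω₂ (A₁ * ωp t * ω₁ t - A₂ * ωp t * ω₃ t) t)
    (h₃ : ∀ t, HasDerivAt ω₃ (A₂ * ωp t * ω₂ t - A₁ * ωp t * ω₄ t) t)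
    (h₄ : ∀ t, HasDerivAt ω₄ (A₂ * ωp t * ω₃ t) t)
    (hp : ∀ t, HasDerivAt ωp (A₁₂ * (ω₃ t * ω₄ t - ω₁ t * ω₂ t)) t) :
    ∀ t, HasDerivAt
      (fun t => (ωp t) ^ 2 + (ω₁ t) ^ 2 + (ω₂ t) ^ 2 + (ω₃ t) ^ 2 + (ω₄ t) ^ 2) 0 t := by
  intro t
  have hJ : HasDerivAt
      (fun t => (ωp t) ^ 2 + (ω₁ t) ^ 2 + (ω₂ t) ^ 2 + (ω₃ t) ^ 2 + (ω₄ t) ^ 2) _ t :=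
    (((((hp t).pow 2).add ((h₁ t).pow 2)).add ((h₂ t).pow 2)).add ((h₃ t).pow 2)).add
      ((h₄ t).pow 2)
  convert hJ using 1
  -- The ωp ω₂ ω₃ terms cancel on their own; those in ωp ω₁ ω₂ and ωp ω₃ ω₄ have coefficients
  -- ±2 (A₁ - A₂ - A₁₂).
  subst hA₁₂
  ring
end

section
/- For the complex five-dimensional system, the real quantity J_c = |ω_p|^2 + |ω_1|^2 + |ω_2|^2 + |ω_3|^2 + |ω_4|^2 is conserved: its time derivative along any solution vanishes, provided A_{1,2} = A_1 - A_2 and A_1, A_2 are real. -/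
/-!
Along a solution, `d/dt |ω|² = 2 Re (ω' · conj ω)`. With the triad products
`X = conj ωₚ conj ω₁ ω₂`, `Y = conj ωₚ conj ω₂ ω₃`, `Z = conj ωₚ conj ω₃ ω₄`, the sum of
`ω' · conj ω` over the five components is `A₁ (conj X - X) + A₂ (conj Y - Y) + A₂ (conj Z - Z)`:
the coupling `A₁₂ = A₁ - A₂` of `ωₚ` is exactly what pairs every triad term with its conjugate.
This sum is purely imaginary, so `J_c` has derivative zero.
-/

open ComplexConjugate

theorem HasDerivAt.complex_normSq {f : ℝ → ℂ} {f' : ℂ} {t : ℝ} (hf : HasDerivAt f f' t) :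
    HasDerivAt (fun t => Complex.normSq (f t)) (2 * (f' * conj (f t)).re) t := by
  simpa only [Complex.normSq_eq_norm_sq, Complex.inner] using hf.norm_sq

theorem re_sum_rhs_mul_conj_eq_zero (w₁ w₂ w₃ w₄ wp : ℂ) (A₁ A₂ : ℝ) :
    ((A₁ - A₂ : ℝ) * (conj w₃ * w₄ - conj w₁ * w₂) * conj wp
      + -A₂ * conj wp * w₂ * conj w₁
      + (A₁ * wp * w₁ - A₂ * conj wp * w₃) * conj w₂
      + (A₂ * wp * w₂ - A₁ * conj wp * w₄) * conj w₃
      + A₂ * wp * w₃ * conj w₄).re = 0 := by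
  set X := conj wp * conj w₁ * w₂
  set Y := conj wp * conj w₂ * w₃
  set Z := conj wp * conj w₃ * w₄
  calc _ = (A₁ * (conj X - X) + A₂ * (conj Y - Y) + A₂ * (conj Z - Z)).re := by
        congr 1
        simp only [X, Y, Z, map_mul, Complex.conj_conj, Complex.ofReal_sub]
        ring
    _ = 0 := by simp

/-- For the complex five-dimensional system, the real quantity
`J_c = |ωₚ|² + |ω₁|² + |ω₂|² + |ω₃|² + |ω₄|²` is conserved, provided `A₁₂ = A₁ - A₂`. -/
theorem Jc_invariant (ω₁ ω₂ ω₃ ω₄ ωp : ℝ → ℂ) (A₁ A₂ A₁₂ : ℝ) (hA₁₂ : A₁₂ = A₁ - A₂)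
    (h₁ : ∀ t, HasDerivAt ω₁ (-(A₂ : ℂ) * (starRingEnd ℂ) (ωp t) * ω₂ t) t)
    (h₂ : ∀ t, HasDerivAt ω₂
      ((A₁ : ℂ) * ωp t * ω₁ t - (A₂ : ℂ) * (starRingEnd ℂ) (ωp t) * ω₃ t) t)
    (h₃ : ∀ t, HasDerivAt ω₃
      ((A₂ : ℂ) * ωp t * ω₂ t - (A₁ : ℂ) * (starRingEnd ℂ) (ωp t) * ω₄ t) t)
    (h₄ : ∀ t, HasDerivAt ω₄ ((A₂ : ℂ) * ωp t * ω₃ t) t)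
    (hp : ∀ t, HasDerivAt ωp
      ((A₁₂ : ℂ) * ((starRingEnd ℂ) (ω₃ t) * ω₄ t - (starRingEnd ℂ) (ω₁ t) * ω₂ t)) t) :
    ∀ t, HasDerivAt
      (fun t => Complex.normSq (ωp t) + Complex.normSq (ω₁ t) + Complex.normSq (ω₂ t)
        + Complex.normSq (ω₃ t) + Complex.normSq (ω₄ t)) (0 : ℝ) t := by
  intro t
  subst hA₁₂
  have hre := re_sum_rhs_mul_conj_eq_zero (ω₁ t) (ω₂ t) (ω₃ t) (ω₄ t) (ωp t) A₁ A₂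
  simp only [Complex.add_re] at hre
  refine (((((hp t).complex_normSq.add (h₁ t).complex_normSq).add (h₂ t).complex_normSq).add
    (h₃ t).complex_normSq).add (h₄ t).complex_normSq).congr_deriv ?_
  linarith
end

section
/- For the complex five-dimensional system, the complex quantity I_c = 2 A_{1,2}(conj(ω_1) ω_3 + conj(ω_2) ω_4) + A_2 ω_p^2 is conserved along solutions. -/
/-!
Differentiate `I_c` by the product rule and substitute the equations of motion. In the
derivative of `conj(ω₁)ω₃ + conj(ω₂)ω₄` the `conj(ωₚ)`-terms and the `conj(ω₂)ω₃`-terms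
cancel, leaving `A₂ωₚ(conj(ω₁)ω₂ - conj(ω₃)ω₄)`; after the factor `2A₁₂` this is cancelled
by the derivative of `A₂ωₚ²`, which is `2A₂A₁₂ ωₚ (conj(ω₃)ω₄ - conj(ω₁)ω₂)` by the last equation.
-/

open ComplexConjugate

theorem HasDerivAt.conj_mul {f g : ℝ → ℂ} {f' g' : ℂ} {t : ℝ} (hf : HasDerivAt f f' t)
    (hg : HasDerivAt g g' t) :
    HasDerivAt (fun s => conj (f s) * g s) (conj f' * g t + conj (f t) * g') t :=
  hf.star.mul hg

theorem HasDerivAt.fun_sq {𝕜 𝔸 : Type*} [NontriviallyNormedField 𝕜] [NormedCommRing 𝔸]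
    [NormedAlgebra 𝕜 𝔸] {f : 𝕜 → 𝔸} {f' : 𝔸} {t : 𝕜} (hf : HasDerivAt f f' t) :
    HasDerivAt (fun s => f s ^ 2) (2 * f t * f') t := by
  simpa using hf.fun_pow 2

theorem Ic_derivative_eq_zero (w₁ w₂ w₃ w₄ p : ℂ) (A₁ A₂ : ℝ) :
    2 * ((A₁ - A₂ : ℝ) : ℂ) *
        (conj (-(A₂ : ℂ) * conj p * w₂) * w₃ + conj w₁ * (A₂ * p * w₂ - A₁ * conj p * w₄) +
          (conj (A₁ * p * w₁ - A₂ * conj p * w₃) * w₄ + conj w₂ * (A₂ * p * w₃))) +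
      A₂ * (2 * p * (((A₁ - A₂ : ℝ) : ℂ) * (conj w₃ * w₄ - conj w₁ * w₂))) = 0 := by
  simp only [map_mul, map_sub, map_neg, Complex.conj_ofReal, Complex.conj_conj]
  ring

/-- For the complex five-dimensional system, the complex quantity
`I_c = 2A₁₂(conj(ω₁)ω₃ + conj(ω₂)ω₄) + A₂ωₚ²` is conserved along solutions. -/
theorem Ic_invariant (ω₁ ω₂ ω₃ ω₄ ωp : ℝ → ℂ) (A₁ A₂ A₁₂ : ℝ) (hA₁₂ : A₁₂ = A₁ - A₂)
    (h₁ : ∀ t, HasDerivAt ω₁ (-(A₂ : ℂ) * (starRingEnd ℂ) (ωp t) * ω₂ t) t)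
    (h₂ : ∀ t, HasDerivAt ω₂
      ((A₁ : ℂ) * ωp t * ω₁ t - (A₂ : ℂ) * (starRingEnd ℂ) (ωp t) * ω₃ t) t)
    (h₃ : ∀ t, HasDerivAt ω₃
      ((A₂ : ℂ) * ωp t * ω₂ t - (A₁ : ℂ) * (starRingEnd ℂ) (ωp t) * ω₄ t) t)
    (h₄ : ∀ t, HasDerivAt ω₄ ((A₂ : ℂ) * ωp t * ω₃ t) t)
    (hp : ∀ t, HasDerivAt ωp
      ((A₁₂ : ℂ) * ((starRingEnd ℂ) (ω₃ t) * ω₄ t - (starRingEnd ℂ) (ω₁ t) * ω₂ t)) t) :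
    ∀ t, HasDerivAt
      (fun t => 2 * (A₁₂ : ℂ) * ((starRingEnd ℂ) (ω₁ t) * ω₃ t
        + (starRingEnd ℂ) (ω₂ t) * ω₄ t) + (A₂ : ℂ) * (ωp t) ^ 2) (0 : ℂ) t := by
  subst hA₁₂
  intro t
  have hI := ((((h₁ t).conj_mul (h₃ t)).add ((h₂ t).conj_mul (h₄ t))).const_mul
    (2 * ((A₁ - A₂ : ℝ) : ℂ))).add ((hp t).fun_sq.const_mul (A₂ : ℂ))
  rwa [Ic_derivative_eq_zero] at hI
end

section
/- The explicit curves defined by ω_p(t) = Γ tanh τ, ω_1 = r cos θ, ω_4 = r sin θ, ω_2 = ρ cos ϑ, ω_3 = ρ sin ϑ, with r = √(A_2/(A_2 - A_1)) Γ sech τ, ρ = √(-A_1/A_2) r, θ = -(A_2/(2κ)) ln cosh τ + θ_0, θ + ϑ constant with cos(θ+ϑ) = κ/√(-A_1 A_2), τ = κΓt + τ_0, and κ = ±√(-A_1 A_2)√(1 + A_2/(4A_1)), solve the five-dimensional ODE system ω_1' = -A_2 ω_p ω_2, ω_2' = A_1 ω_p ω_1 - A_2 ω_p ω_3, ω_3'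 = A_2 ω_p ω_2 - A_1 ω_p ω_4, ω_4' = A_2 ω_p ω_3, ω_p' = A_{1,2}(ω_3 ω_4 - ω_1 ω_2), where A_1 = -3/10, A_2 = 1/2, A_{1,2} = -4/5. -/
/-! Write `ω₁ + iω₄ = r e^{iθ}` and `ω₂ + iω₃ = ρ e^{i(c - θ)}` with a constant phase sum `c`.
The system then splits into `r' + i r θ' = -A₂ ωp ρ e^{-ic}`,
`ρ' - i ρ θ' = A₁ ωp r e^{-ic} + i A₂ ωp ρ` and `ωp' = -A₁₂ r ρ cos c`.
With `ρ = b r` and `A₂ b² = -A₁` the two equations for `θ'` agree exactly when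
`b sin c = -1/2`, and for `κ = A₂ b cos c` everything reduces to `r' = -κ ωp r`,
`θ' = -A₂ ωp / 2` and `ωp' = κ Γ² sech² τ`; the last one also needs the amplitude `a` of `r`
to satisfy `A₁₂ a² = -A₂`. The profile `ωp = Γ tanh τ`, `r = a Γ sech τ`, `θ ∝ log cosh τ`
solves these. -/

open Real Set

section Hyperbolic

variable {f : ℝ → ℝ} {f' x : ℝ}

theorem HasDerivAt.tanh (hf : HasDerivAt f f' x) :
    HasDerivAt (fun s => Real.tanh (f s)) (f' * (Real.cosh (f x))⁻¹ ^ 2) x := by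
  have hc := (cosh_pos (f x)).ne'
  refine ((hf.sinh.div hf.cosh hc).congr_deriv ?_).congr_of_eventuallyEq
    (.of_forall fun s => tanh_eq_sinh_div_cosh (f s))
  field_simp
  linear_combination f' * cosh_sq_sub_sinh_sq (f x)

theorem HasDerivAt.inv_cosh (hf : HasDerivAt f f' x) :
    HasDerivAt (fun s => (Real.cosh (f s))⁻¹)
      (-(f' * Real.tanh (f x) * (Real.cosh (f x))⁻¹)) x := by
  refine (hf.cosh.inv (cosh_pos (f x)).ne').congr_deriv ?_
  rw [tanh_eq_sinh_div_cosh]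
  ring

theorem HasDerivAt.log_cosh (hf : HasDerivAt f f' x) :
    HasDerivAt (fun s => Real.log (Real.cosh (f s))) (f' * Real.tanh (f x)) x := by
  refine (hf.cosh.log (cosh_pos (f x)).ne').congr_deriv ?_
  rw [tanh_eq_sinh_div_cosh]
  ring

end Hyperbolic

def SolvesSubsystem (A₁ A₂ A₁₂ : ℝ) (ω₁ ω₂ ω₃ ω₄ ωp : ℝ → ℝ) : Prop :=
  ∀ t : ℝ,
    HasDerivAt ω₁ (-A₂ * ωp t * ω₂ t) t
    ∧ HasDerivAt ω₂ (A₁ * ωp t * ω₁ t - A₂ * ωp t * ω₃ t) t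
    ∧ HasDerivAt ω₃ (A₂ * ωp t * ω₂ t - A₁ * ωp t * ω₄ t) t
    ∧ HasDerivAt ω₄ (A₂ * ωp t * ω₃ t) t
    ∧ HasDerivAt ωp (A₁₂ * (ω₃ t * ω₄ t - ω₁ t * ω₂ t)) t

theorem solvesSubsystem_of_polar {A₁ A₂ A₁₂ c : ℝ} {r ρ θ θ' ωp : ℝ → ℝ}
    (hr : ∀ t, HasDerivAt r (-(A₂ * cos c * ωp t * ρ t)) t)
    (hρ : ∀ t, HasDerivAt ρ (A₁ * cos c * ωp t * r t) t)
    (hθ : ∀ t, HasDerivAt θ (θ' t) t)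
    (hrθ : ∀ t, r t * θ' t = A₂ * sin c * ωp t * ρ t)
    (hρθ : ∀ t, ρ t * θ' t = A₁ * sin c * ωp t * r t - A₂ * ωp t * ρ t)
    (hωp : ∀ t, HasDerivAt ωp (-(A₁₂ * cos c * r t * ρ t)) t) :
    SolvesSubsystem A₁ A₂ A₁₂ (fun t => r t * cos (θ t)) (fun t => ρ t * cos (c - θ t))
      (fun t => ρ t * sin (c - θ t)) (fun t => r t * sin (θ t)) ωp := by
  intro t
  dsimp only
  have hψ := (hθ t).const_sub c
  have hcosψ := cos_sub c (θ t)
  have hsinψ := sin_sub c (θ t)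
  have hcosθ : cos (θ t) = cos c * cos (c - θ t) + sin c * sin (c - θ t) := by
    rw [← cos_sub, sub_sub_cancel]
  have hsinθ : sin (θ t) = sin c * cos (c - θ t) - cos c * sin (c - θ t) := by
    rw [← sin_sub, sub_sub_cancel]
  have hcos_add : cos (θ t) * cos (c - θ t) - sin (θ t) * sin (c - θ t) = cos c := by
    rw [← cos_add, add_sub_cancel]
  refine ⟨((hr t).mul (hθ t).cos).congr_deriv ?_, ((hρ t).mul hψ.cos).congr_deriv ?_,
    ((hρ t).mul hψ.sin).congr_deriv ?_, ((hr t).mul (hθ t).sin).congr_deriv ?_,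
    (hωp t).congr_deriv ?_⟩
  · rw [hcosψ]; linear_combination -sin (θ t) * hrθ t
  · rw [hcosθ]; linear_combination sin (c - θ t) * hρθ t
  · rw [hsinθ]; linear_combination -cos (c - θ t) * hρθ t
  · rw [hsinψ]; linear_combination cos (θ t) * hrθ t
  · linear_combination A₁₂ * r t * ρ t * hcos_add

theorem ne_zero_and_sin_eq_of_phase {κ c x : ℝ} (hx : x ∈ Icc (-1) 1)
    (hc : (0 < κ ∧ c = -arcsin x) ∨ (κ < 0 ∧ c = π + arcsin x)) : κ ≠ 0 ∧ sin c = -x := by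
  rcases hc with ⟨hκ, rfl⟩ | ⟨hκ, rfl⟩
  · exact ⟨hκ.ne', by rw [sin_neg, sin_arcsin hx.1 hx.2]⟩
  · exact ⟨hκ.ne, by rw [add_comm, sin_add_pi, sin_arcsin hx.1 hx.2]⟩

theorem solvesSubsystem_perverted_orbit (Γ θ₀ τ₀ κ c A₁ A₂ A₁₂ a b : ℝ) (hκ₀ : κ ≠ 0)
    (hκ : κ = A₂ * b * cos c) (hsin : b * sin c = -(1 / 2)) (hb : A₂ * b ^ 2 = -A₁)
    (ha : A₁₂ * a ^ 2 = -A₂) :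
    let τ : ℝ → ℝ := fun t => κ * Γ * t + τ₀
    let ωp : ℝ → ℝ := fun t => Γ * tanh (τ t)
    let r : ℝ → ℝ := fun t => a * Γ * (cosh (τ t))⁻¹
    let θ : ℝ → ℝ := fun t => -(A₂ / (2 * κ)) * log (cosh (τ t)) + θ₀
    let ρ : ℝ → ℝ := fun t => b * r t
    SolvesSubsystem A₁ A₂ A₁₂ (fun t => r t * cos (θ t)) (fun t => ρ t * cos (c - θ t))
      (fun t => ρ t * sin (c - θ t)) (fun t => r t * sin (θ t)) ωp := by
  intro τ ωp r θ ρ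
  have hτ (t : ℝ) : HasDerivAt τ (κ * Γ) t :=
    (((hasDerivAt_id' t).const_mul (κ * Γ)).add_const τ₀).congr_deriv (mul_one _)
  have hr (t : ℝ) : HasDerivAt r (-(A₂ * cos c * ωp t * ρ t)) t :=
    ((hτ t).inv_cosh.const_mul (a * Γ)).congr_deriv (by simp only [ωp, ρ, r]; rw [hκ]; ring)
  refine solvesSubsystem_of_polar (θ' := fun t => -(A₂ / 2) * ωp t) hr
    (fun t => ((hr t).const_mul b).congr_deriv ?_)
    (fun t => (((hτ t).log_cosh.const_mul _).add_const θ₀).congr_deriv ?_)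
    (fun t => ?_) (fun t => ?_) (fun t => ((hτ t).tanh.const_mul Γ).congr_deriv ?_)
  · simp only [ρ]; linear_combination -(cos c * ωp t * r t) * hb
  · simp only [ωp]; field_simp
  · simp only [ρ]; linear_combination -(A₂ * ωp t * r t) * hsin
  · simp only [ρ]; linear_combination (A₂ * b * ωp t * r t) * hsin - (sin c * ωp t * r t) * hb
  · simp only [ρ, r]; rw [hκ]; linear_combination (b * cos c * Γ ^ 2 * (cosh (τ t))⁻¹ ^ 2) * ha

/-- `c` is the constant `θ + ϑ`; its two admissible values give the two signs of
`κ = √(-A₁A₂) cos c = ±√(-A₁A₂)√(1 + A₂/(4A₁))`. -/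
theorem perverted_heteroclinic_orbit (Γ θ₀ τ₀ κ c : ℝ)
    (A₁ A₂ A₁₂ : ℝ) (hA₁ : A₁ = -(3 / 10)) (hA₂ : A₂ = 1 / 2) (hA₁₂ : A₁₂ = -(4 / 5))
    (hc : (0 < κ ∧ c = -Real.arcsin ((1 / 2) * Real.sqrt (A₂ / (-A₁))))
        ∨ (κ < 0 ∧ c = Real.pi + Real.arcsin ((1 / 2) * Real.sqrt (A₂ / (-A₁)))))
    (hκ : κ = Real.sqrt (-(A₁ * A₂)) * Real.cos c) :
    let τ : ℝ → ℝ := fun t => κ * Γ * t + τ₀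
    let ωp : ℝ → ℝ := fun t => Γ * Real.tanh (τ t)
    let r : ℝ → ℝ := fun t => Real.sqrt (A₂ / (A₂ - A₁)) * Γ * (Real.cosh (τ t))⁻¹
    let θ : ℝ → ℝ := fun t => -(A₂ / (2 * κ)) * Real.log (Real.cosh (τ t)) + θ₀
    let ρ : ℝ → ℝ := fun t => Real.sqrt (-A₁ / A₂) * r t
    let ω₁ : ℝ → ℝ := fun t => r t * Real.cos (θ t)
    let ω₄ : ℝ → ℝ := fun t => r t * Real.sin (θ t)
    let ω₂ : ℝ → ℝ := fun t => ρ t * Real.cos (c - θ t)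
    let ω₃ : ℝ → ℝ := fun t => ρ t * Real.sin (c - θ t)
    ∀ t : ℝ,
      HasDerivAt ω₁ (-A₂ * ωp t * ω₂ t) t
      ∧ HasDerivAt ω₂ (A₁ * ωp t * ω₁ t - A₂ * ωp t * ω₃ t) t
      ∧ HasDerivAt ω₃ (A₂ * ωp t * ω₂ t - A₁ * ωp t * ω₄ t) t
      ∧ HasDerivAt ω₄ (A₂ * ωp t * ω₃ t) t
      ∧ HasDerivAt ωp (A₁₂ * (ω₃ t * ω₄ t - ω₁ t * ω₂ t)) t := by
  have hx : 1 / 2 * √(A₂ / -A₁) ∈ Icc (-1 : ℝ) 1 := by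
    subst hA₁ hA₂
    refine ⟨by linarith [sqrt_nonneg (1 / 2 / -(-(3 / 10) : ℝ))], ?_⟩
    have := (sqrt_le_left zero_le_two).2 (by norm_num : 1 / 2 / -(-(3 / 10) : ℝ) ≤ 2 ^ 2)
    linarith
  obtain ⟨hκ₀, hsin⟩ := ne_zero_and_sin_eq_of_phase hx hc
  subst hA₁ hA₂ hA₁₂
  refine solvesSubsystem_perverted_orbit Γ θ₀ τ₀ κ c _ _ _ _ _ hκ₀ ?_ ?_ ?_ ?_
  · rw [hκ, ← sqrt_sq (show (0 : ℝ) ≤ 1 / 2 by norm_num), ← sqrt_mul (sq_nonneg _)]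
    norm_num
  · rw [hsin, mul_neg, mul_left_comm, ← sqrt_mul (by norm_num)]
    norm_num
  · rw [sq_sqrt (by norm_num)]; norm_num
  · rw [sq_sqrt (by norm_num)]; norm_num
end

section
/- Let Δ(t) = ⟨∇U(ω^{(0)}(t)), w(t)⟩ where ω^{(0)} solves ω' = f(ω), U is a C^2 invariant of f, and w solves the inhomogeneous variational equation w' = ∇f(ω^{(0)}) ∘ w + h. Then Δ'(t) = ⟨∇U(ω^{(0)}(t)), h(t)⟩ for all t. -/
/-!
Along the solution, `Δ' = D²U(ω⁰)(f(ω⁰), w) + DU(ω⁰)(Df(ω⁰) w + h)`. Differentiating the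
invariance `DU(y)(f y) = 0` in the direction `w` gives `D²U(ω⁰)(w, f(ω⁰)) + DU(ω⁰)(Df(ω⁰) w) = 0`,
and by symmetry of `D²U` the two terms cancel, leaving `DU(ω⁰) h`.
-/

variable {𝕜 E F : Type*} [NontriviallyNormedField 𝕜]
  [NormedAddCommGroup E] [NormedSpace 𝕜 E] [NormedAddCommGroup F] [NormedSpace 𝕜 F]

variable (𝕜) in
def IsFirstIntegral (U : E → F) (f : E → E) : Prop :=
  ∀ y, fderiv 𝕜 U y (f y) = 0

namespace IsFirstIntegral

variable {U : E → F} {f : E → E}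

theorem fderiv_fderiv_apply_add_fderiv_apply_fderiv (hI : IsFirstIntegral 𝕜 U f) {x : E}
    (hU : DifferentiableAt 𝕜 (fderiv 𝕜 U) x) (hf : DifferentiableAt 𝕜 f x) (v : E) :
    fderiv 𝕜 (fderiv 𝕜 U) x v (f x) + fderiv 𝕜 U x (fderiv 𝕜 f x v) = 0 := by
  have hderiv : HasFDerivAt (fun y => fderiv 𝕜 U y (f y))
      ((fderiv 𝕜 U x).comp (fderiv 𝕜 f x) + (fderiv 𝕜 (fderiv 𝕜 U) x).flip (f x)) x :=
    hU.hasFDerivAt.clm_apply hf.hasFDerivAt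
  have hconst : (fun y => fderiv 𝕜 U y (f y)) = fun _ => 0 := funext hI
  rw [hconst] at hderiv
  have hzero := congrArg (fun L : E →L[𝕜] F => L v) (hderiv.unique (hasFDerivAt_const 0 x))
  simpa [add_comm] using hzero

theorem hasDerivAt_fderiv_apply {γ w h : 𝕜 → E} {t : 𝕜} (hI : IsFirstIntegral 𝕜 U f)
    (hU : DifferentiableAt 𝕜 (fderiv 𝕜 U) (γ t)) (hU_symm : IsSymmSndFDerivAt 𝕜 U (γ t))
    (hf : DifferentiableAt 𝕜 f (γ t)) (hγ : HasDerivAt γ (f (γ t)) t)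
    (hw : HasDerivAt w (fderiv 𝕜 f (γ t) (w t) + h t) t) :
    HasDerivAt (fun s => fderiv 𝕜 U (γ s) (w s)) (fderiv 𝕜 U (γ t) (h t)) t := by
  have hchain : HasDerivAt (fun s => fderiv 𝕜 U (γ s) (w s))
      (fderiv 𝕜 (fderiv 𝕜 U) (γ t) (f (γ t)) (w t) +
        fderiv 𝕜 U (γ t) (fderiv 𝕜 f (γ t) (w t) + h t)) t :=
    (hU.hasFDerivAt.comp_hasDerivAt t hγ).clm_apply hw
  refine hchain.congr_deriv ?_
  rw [map_add, hU_symm.eq, ← add_assoc,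
    hI.fderiv_fderiv_apply_add_fderiv_apply_fderiv hU hf, zero_add]

end IsFirstIntegral

theorem melnikov_derivative_identity_general (n : ℕ)
    (f : EuclideanSpace ℝ (Fin n) → EuclideanSpace ℝ (Fin n))
    (U : EuclideanSpace ℝ (Fin n) → ℝ)
    (hf : ContDiff ℝ 1 f) (hU : ContDiff ℝ 2 U)
    (hinv : ∀ ω, fderiv ℝ U ω (f ω) = 0)
    (ω₀ w h : ℝ → EuclideanSpace ℝ (Fin n))
    (hω₀ : ∀ t, HasDerivAt ω₀ (f (ω₀ t)) t)
    (hw : ∀ t, HasDerivAt w ((fderiv ℝ f (ω₀ t)) (w t) + h t) t) :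
    ∀ t, HasDerivAt (fun t => fderiv ℝ U (ω₀ t) (w t))
      (fderiv ℝ U (ω₀ t) (h t)) t := by
  have hI : IsFirstIntegral ℝ U f := hinv
  have hU' : Differentiable ℝ (fderiv ℝ U) :=
    (hU.fderiv_right (m := 1) le_rfl).differentiable one_ne_zero
  intro t
  exact hI.hasDerivAt_fderiv_apply (hU' _) (hU.contDiffAt.isSymmSndFDerivAt (by simp))
    (hf.differentiable one_ne_zero _) (hω₀ t) (hw t)

/-- If `U` is a `C²` invariant of the `C¹` vector field `f`, `ω⁰` solves `ω' = f(ω)`,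
and `w` solves the inhomogeneous variational equation `w' = Df(ω⁰)w + h`, then
`Δ(t) = ⟨∇U(ω⁰(t)), w(t)⟩` satisfies `Δ'(t) = ⟨∇U(ω⁰(t)), h(t)⟩`. -/
theorem melnikov_derivative_identity (n : ℕ)
    (f : EuclideanSpace ℝ (Fin n) → EuclideanSpace ℝ (Fin n))
    (U : EuclideanSpace ℝ (Fin n) → ℝ)
    (hf : ContDiff ℝ 1 f) (hU : ContDiff ℝ 2 U)
    (hinv : ∀ ω, fderiv ℝ U ω (f ω) = 0)
    (ω₀ w h : ℝ → EuclideanSpace ℝ (Fin n)) (hcont : Continuous h)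
    (hω₀ : ∀ t, HasDerivAt ω₀ (f (ω₀ t)) t)
    (hw : ∀ t, HasDerivAt w ((fderiv ℝ f (ω₀ t)) (w t) + h t) t) :
    ∀ t, HasDerivAt (fun t => fderiv ℝ U (ω₀ t) (w t))
      (fderiv ℝ U (ω₀ t) (h t)) t :=
  melnikov_derivative_identity_general n f U hf hU hinv ω₀ w h hω₀ hw
end
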